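/- arXiv:1910.08653 — 7 statements merged into one kernel-verified Lean document; each statement's English description precedes it below -/
import Mathlib

section
/- Let M be the quotient of the set of 12-tuples (k,l,r,d,e₁,…,e₈) ∈ ℤ¹² satisfying the constraint that 0 ≤ d < gcd(k,l,r) when (k,l,r) ≠ (0,0,0) (and d ∈ ℤ arbitrary when k = l = r = 0) by Φ-equivalence, and let N be the quotient of ℤ¹² by ψ-equivalence. Then the map F induces a well-defined bijection from M onto N; explicitly: (i) if T, T′ ∈ ℤ¹² are Φ-equivalent then F(T) and F(T′) are ψ-equivalent; (ii) every element of ℤ¹² is ψ-equivalent to F(T) for some T satisfying the constraint on d; and (iii) if T and T′ both satisfy the constraint on d and F(T), F(T′) are ψ-equivalent, then T and T′ are Φ-equivalent. -/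
/-- A 12-tuple of integers, with coordinates written `(c₁,…,c₆,f₁,…,f₄,t₁,t₂)`. -/
structure Tuple : Type where
  c1 : ℤ
  c2 : ℤ
  c3 : ℤ
  c4 : ℤ
  c5 : ℤ
  c6 : ℤ
  f1 : ℤ
  f2 : ℤ
  f3 : ℤ
  f4 : ℤ
  t1 : ℤ
  t2 : ℤ

/-- The move ψ₂₁ : f₃↦f₃+c₅, f₄↦f₄−c₁, t₁↦t₁+f₁. -/
def psi21 : Equiv.Perm Tuple where
  toFun x := { x with f3 := x.f3 + x.c5, f4 := x.f4 - x.c1, t1 := x.t1 + x.f1 }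
  invFun x := { x with f3 := x.f3 - x.c5, f4 := x.f4 + x.c1, t1 := x.t1 - x.f1 }
  left_inv x := by cases x; simp
  right_inv x := by cases x; simp

/-- The move ψ₄₁ : f₂↦f₂+c₆, f₃↦f₃−c₅, t₂↦t₂−f₁. -/
def psi41 : Equiv.Perm Tuple where
  toFun x := { x with f2 := x.f2 + x.c6, f3 := x.f3 - x.c5, t2 := x.t2 - x.f1 }
  invFun x := { x with f2 := x.f2 - x.c6, f3 := x.f3 + x.c5, t2 := x.t2 + x.f1 }
  left_inv x := by cases x; simp
  right_inv x := by cases x; simp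

/-- The move ψ₁₂ : f₃↦f₃−c₄, f₄↦f₄+c₂, t₁↦t₁+f₂. -/
def psi12 : Equiv.Perm Tuple where
  toFun x := { x with f3 := x.f3 - x.c4, f4 := x.f4 + x.c2, t1 := x.t1 + x.f2 }
  invFun x := { x with f3 := x.f3 + x.c4, f4 := x.f4 - x.c2, t1 := x.t1 - x.f2 }
  left_inv x := by cases x; simp
  right_inv x := by cases x; simp

/-- The move ψ₃₂ : f₁↦f₁+c₆, f₄↦f₄−c₂, t₂↦t₂−f₂. -/
def psi32 : Equiv.Perm Tuple where
  toFun x := { x with f1 := x.f1 + x.c6, f4 := x.f4 - x.c2, t2 := x.t2 - x.f2 }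
  invFun x := { x with f1 := x.f1 - x.c6, f4 := x.f4 + x.c2, t2 := x.t2 + x.f2 }
  left_inv x := by cases x; simp
  right_inv x := by cases x; simp

/-- The move ψ₄₃ : f₁↦f₁+c₅, f₂↦f₂−c₄, t₁↦t₁+f₃. -/
def psi43 : Equiv.Perm Tuple where
  toFun x := { x with f1 := x.f1 + x.c5, f2 := x.f2 - x.c4, t1 := x.t1 + x.f3 }
  invFun x := { x with f1 := x.f1 - x.c5, f2 := x.f2 + x.c4, t1 := x.t1 - x.f3 }
  left_inv x := by cases x; simp
  right_inv x := by cases x; simp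

/-- The move ψ₂₃ : f₁↦f₁−c₅, f₄↦f₄+c₃, t₂↦t₂−f₃. -/
def psi23 : Equiv.Perm Tuple where
  toFun x := { x with f1 := x.f1 - x.c5, f4 := x.f4 + x.c3, t2 := x.t2 - x.f3 }
  invFun x := { x with f1 := x.f1 + x.c5, f4 := x.f4 - x.c3, t2 := x.t2 + x.f3 }
  left_inv x := by cases x; simp
  right_inv x := by cases x; simp

/-- The move ψ₃₄ : f₁↦f₁−c₁, f₂↦f₂+c₂, t₁↦t₁+f₄. -/
def psi34 : Equiv.Perm Tuple where
  toFun x := { x with f1 := x.f1 - x.c1, f2 := x.f2 + x.c2, t1 := x.t1 + x.f4 }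
  invFun x := { x with f1 := x.f1 + x.c1, f2 := x.f2 - x.c2, t1 := x.t1 - x.f4 }
  left_inv x := by cases x; simp
  right_inv x := by cases x; simp

/-- The move ψ₁₄ : f₂↦f₂−c₂, f₃↦f₃+c₃, t₂↦t₂−f₄. -/
def psi14 : Equiv.Perm Tuple where
  toFun x := { x with f2 := x.f2 - x.c2, f3 := x.f3 + x.c3, t2 := x.t2 - x.f4 }
  invFun x := { x with f2 := x.f2 + x.c2, f3 := x.f3 - x.c3, t2 := x.t2 + x.f4 }
  left_inv x := by cases x; simp
  right_inv x := by cases x; simp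

/-- The list of the eight ψ-moves. -/
def psiMoves : List (Equiv.Perm Tuple) :=
  [psi21, psi41, psi12, psi32, psi43, psi23, psi34, psi14]

/-- Two tuples are ψ-equivalent if one is obtained from the other by a finite
composition of the eight ψ-moves and their inverses, i.e. they are related by the
equivalence relation generated by single applications of the moves. -/
def PsiEquiv : Tuple → Tuple → Prop :=
  Relation.EqvGen (fun x y => ∃ g ∈ psiMoves, g x = y)

/-- A 12-tuple of integers `(k,l,r,d,e₁,…,e₈)` in Levine's coordinates. -/
structure LTuple : Type where
  k : ℤ
  l : ℤ
  r : ℤ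
  d : ℤ
  e1 : ℤ
  e2 : ℤ
  e3 : ℤ
  e4 : ℤ
  e5 : ℤ
  e6 : ℤ
  e7 : ℤ
  e8 : ℤ

/-- Levine's move Φ₁ : adds (k,r,0,d,−d) to (e₄,e₅,e₆,e₇,e₈). -/
def Phi1 (x : LTuple) : LTuple :=
  { x with e4 := x.e4 + x.k, e5 := x.e5 + x.r, e7 := x.e7 + x.d, e8 := x.e8 - x.d }

/-- Levine's move Φ₂ : adds (−k,0,l,−d,0) to (e₄,e₅,e₆,e₇,e₈). -/
def Phi2 (x : LTuple) : LTuple :=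
  { x with e4 := x.e4 - x.k, e6 := x.e6 + x.l, e7 := x.e7 - x.d }

/-- Levine's move Φ₃ : adds (−e₁,0,e₃,e₅,0) to (e₄,e₅,e₆,e₇,e₈). -/
def Phi3 (x : LTuple) : LTuple :=
  { x with e4 := x.e4 - x.e1, e6 := x.e6 + x.e3, e7 := x.e7 + x.e5 }

/-- Levine's move Φ₄ : adds (e₂,e₃,0,e₆,−e₆) to (e₄,e₅,e₆,e₇,e₈). -/
def Phi4 (x : LTuple) : LTuple :=
  { x with e4 := x.e4 + x.e2, e5 := x.e5 + x.e3, e7 := x.e7 + x.e6, e8 := x.e8 - x.e6 }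

/-- Levine's move Φ₅ : adds (0,−e₁,−e₂,0,e₄) to (e₄,e₅,e₆,e₇,e₈). -/
def Phi5 (x : LTuple) : LTuple :=
  { x with e5 := x.e5 - x.e1, e6 := x.e6 - x.e2, e8 := x.e8 + x.e4 }

/-- Levine's move Φ₆(a,b,c) : adds (ce₂−be₁,−ae₁,0,ae₄,−abe₁−ce₆+be₅) to
(e₄,e₅,e₆,e₇,e₈), all right-hand sides computed from the tuple before the move. -/
def Phi6 (a b c : ℤ) (x : LTuple) : LTuple :=
  { x with
    e4 := x.e4 + (c * x.e2 - b * x.e1)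
    e5 := x.e5 - a * x.e1
    e7 := x.e7 + a * x.e4
    e8 := x.e8 + (-(a * b * x.e1) - c * x.e6 + b * x.e5) }

/-- One application of a Levine move (Φ₆ only with admissible parameters). -/
def PhiStep (x y : LTuple) : Prop :=
  y = Phi1 x ∨ y = Phi2 x ∨ y = Phi3 x ∨ y = Phi4 x ∨ y = Phi5 x ∨
    ∃ a b c : ℤ, a * x.k - b * x.r + c * x.l = 0 ∧ y = Phi6 a b c x

/-- Φ-equivalence: generated by Levine's moves and their inverses. -/
def PhiEquiv : LTuple → LTuple → Prop := Relation.EqvGen PhiStep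

/-- The map F : (k,l,r,d,e₁,…,e₈) ↦ (−l,−r,−k,−e₁,−e₂,−e₃,−e₆,e₅,−e₄,d,e₇+e₈,−e₇),
written in the coordinates (c₁,…,c₆,f₁,…,f₄,t₁,t₂). -/
def F (x : LTuple) : Tuple :=
  ⟨-x.l, -x.r, -x.k, -x.e1, -x.e2, -x.e3, -x.e6, x.e5, -x.e4, x.d, x.e7 + x.e8, -x.e7⟩

/-- The constraint on `d`: when (k,l,r) ≠ (0,0,0), require 0 ≤ d < gcd(k,l,r). -/
def DCon (x : LTuple) : Prop :=
  ¬(x.k = 0 ∧ x.l = 0 ∧ x.r = 0) →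
    0 ≤ x.d ∧ x.d < (Int.gcd x.k (Int.gcd x.l x.r) : ℤ)

/-! `F` is a bijection of `ℤ¹²`, and it carries every Levine move to a word
in the ψ-moves, which gives (i).

The moves ψ₂₁, ψ₁₂, ψ₂₃ shift `f₄ = d` by `l`, `-r`, `-k`, so by Bézout every tuple is
ψ-equivalent to one with `0 ≤ d < gcd(k,l,r)`, which gives (ii).

For (iii), the group generated by the ψ-moves is nilpotent of class two: every element is
`ψ₂₁^a₁ ψ₁₂^a₂ ψ₄₃^a₃ ψ₃₄^a₄ ψ₄₁^b₁ ψ₃₂^b₂ ψ₂₃^b₃ ψ₁₄^b₄` followed by a central translation of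
`(t₁, t₂)`. Such an element shifts `d` by `-b₃k + a₁l + (b₂ - a₂)r`, a multiple of
`gcd(k,l,r)`, so the constraint on `d` forces the shift to vanish. A word with zero shift is
realised by Levine's moves: `Φ₆(-b₃, a₂ - b₂, a₁)` absorbs the `d`-shifting part, and the
central translations are commutators of powers of `Φ₁, …, Φ₅`. -/

attribute [ext] Tuple LTuple

theorem Equivalence.rel_intIterate {α : Type*} {R : α → α → Prop} (hR : Equivalence R)
    {f : α → α} (hf : ∀ x, R x (f x)) (g : ℤ → α → α) (h₀ : ∀ x, g 0 x = x)
    (hsucc : ∀ n x, g (n + 1) x = f (g n x)) (n : ℤ) (x : α) : R x (g n x) := by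
  induction n using Int.induction_on with
  | zero => rw [h₀]; exact hR.refl x
  | succ n ih => rw [hsucc]; exact hR.trans ih (hf _)
  | pred n ih =>
    rw [← sub_add_cancel (-(n : ℤ)) 1, hsucc] at ih
    exact hR.trans ih (hR.symm (hf _))

theorem psiEquiv_equivalence : Equivalence PsiEquiv :=
  Relation.EqvGen.is_equivalence _

theorem PsiEquiv.trans {x y z : Tuple} (h₁ : PsiEquiv x y) (h₂ : PsiEquiv y z) :
    PsiEquiv x z :=
  Relation.EqvGen.trans x y z h₁ h₂

theorem PsiEquiv.symm {x y : Tuple} (h : PsiEquiv x y) : PsiEquiv y x :=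
  Relation.EqvGen.symm x y h

theorem phiEquiv_equivalence : Equivalence PhiEquiv :=
  Relation.EqvGen.is_equivalence _

theorem PhiEquiv.trans {x y z : LTuple} (h₁ : PhiEquiv x y) (h₂ : PhiEquiv y z) :
    PhiEquiv x z :=
  Relation.EqvGen.trans x y z h₁ h₂

theorem PhiEquiv.symm {x y : LTuple} (h : PhiEquiv x y) : PhiEquiv y x :=
  Relation.EqvGen.symm x y h

def Finv (x : Tuple) : LTuple :=
  ⟨-x.c3, -x.c1, -x.c2, x.f4, -x.c4, -x.c5, -x.c6, -x.f3, x.f2, -x.f1, -x.t2, x.t1 + x.t2⟩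

@[simp]
theorem F_Finv (x : Tuple) : F (Finv x) = x := by
  ext <;> simp [F, Finv]

@[simp]
theorem Finv_F (T : LTuple) : Finv (F T) = T := by
  ext <;> simp [F, Finv]

@[simp]
def psi21Pow (n : ℤ) (x : Tuple) : Tuple :=
  { x with f3 := x.f3 + n * x.c5, f4 := x.f4 - n * x.c1, t1 := x.t1 + n * x.f1 }

@[simp]
def psi41Pow (n : ℤ) (x : Tuple) : Tuple :=
  { x with f2 := x.f2 + n * x.c6, f3 := x.f3 - n * x.c5, t2 := x.t2 - n * x.f1 }

@[simp]
def psi12Pow (n : ℤ) (x : Tuple) : Tuple :=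
  { x with f3 := x.f3 - n * x.c4, f4 := x.f4 + n * x.c2, t1 := x.t1 + n * x.f2 }

@[simp]
def psi32Pow (n : ℤ) (x : Tuple) : Tuple :=
  { x with f1 := x.f1 + n * x.c6, f4 := x.f4 - n * x.c2, t2 := x.t2 - n * x.f2 }

@[simp]
def psi43Pow (n : ℤ) (x : Tuple) : Tuple :=
  { x with f1 := x.f1 + n * x.c5, f2 := x.f2 - n * x.c4, t1 := x.t1 + n * x.f3 }

@[simp]
def psi23Pow (n : ℤ) (x : Tuple) : Tuple :=
  { x with f1 := x.f1 - n * x.c5, f4 := x.f4 + n * x.c3, t2 := x.t2 - n * x.f3 }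

@[simp]
def psi34Pow (n : ℤ) (x : Tuple) : Tuple :=
  { x with f1 := x.f1 - n * x.c1, f2 := x.f2 + n * x.c2, t1 := x.t1 + n * x.f4 }

@[simp]
def psi14Pow (n : ℤ) (x : Tuple) : Tuple :=
  { x with f2 := x.f2 - n * x.c2, f3 := x.f3 + n * x.c3, t2 := x.t2 - n * x.f4 }

theorem psiEquiv_apply {g : Equiv.Perm Tuple} (hg : g ∈ psiMoves) (x : Tuple) :
    PsiEquiv x (g x) :=
  Relation.EqvGen.rel _ _ ⟨g, hg, rfl⟩

theorem psiEquiv_psi21Pow (n : ℤ) (x : Tuple) : PsiEquiv x (psi21Pow n x) :=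
  psiEquiv_equivalence.rel_intIterate (psiEquiv_apply (g := psi21) (by simp [psiMoves])) psi21Pow
    (fun x => by ext <;> simp) (fun n x => by ext <;> simp [psi21] <;> ring) n x

theorem psiEquiv_psi41Pow (n : ℤ) (x : Tuple) : PsiEquiv x (psi41Pow n x) :=
  psiEquiv_equivalence.rel_intIterate (psiEquiv_apply (g := psi41) (by simp [psiMoves])) psi41Pow
    (fun x => by ext <;> simp) (fun n x => by ext <;> simp [psi41] <;> ring) n x

theorem psiEquiv_psi12Pow (n : ℤ) (x : Tuple) : PsiEquiv x (psi12Pow n x) :=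
  psiEquiv_equivalence.rel_intIterate (psiEquiv_apply (g := psi12) (by simp [psiMoves])) psi12Pow
    (fun x => by ext <;> simp) (fun n x => by ext <;> simp [psi12] <;> ring) n x

theorem psiEquiv_psi32Pow (n : ℤ) (x : Tuple) : PsiEquiv x (psi32Pow n x) :=
  psiEquiv_equivalence.rel_intIterate (psiEquiv_apply (g := psi32) (by simp [psiMoves])) psi32Pow
    (fun x => by ext <;> simp) (fun n x => by ext <;> simp [psi32] <;> ring) n x

theorem psiEquiv_psi43Pow (n : ℤ) (x : Tuple) : PsiEquiv x (psi43Pow n x) :=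
  psiEquiv_equivalence.rel_intIterate (psiEquiv_apply (g := psi43) (by simp [psiMoves])) psi43Pow
    (fun x => by ext <;> simp) (fun n x => by ext <;> simp [psi43] <;> ring) n x

theorem psiEquiv_psi23Pow (n : ℤ) (x : Tuple) : PsiEquiv x (psi23Pow n x) :=
  psiEquiv_equivalence.rel_intIterate (psiEquiv_apply (g := psi23) (by simp [psiMoves])) psi23Pow
    (fun x => by ext <;> simp) (fun n x => by ext <;> simp [psi23] <;> ring) n x

theorem psiEquiv_psi34Pow (n : ℤ) (x : Tuple) : PsiEquiv x (psi34Pow n x) :=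
  psiEquiv_equivalence.rel_intIterate (psiEquiv_apply (g := psi34) (by simp [psiMoves])) psi34Pow
    (fun x => by ext <;> simp) (fun n x => by ext <;> simp [psi34] <;> ring) n x

theorem psiEquiv_psi14Pow (n : ℤ) (x : Tuple) : PsiEquiv x (psi14Pow n x) :=
  psiEquiv_equivalence.rel_intIterate (psiEquiv_apply (g := psi14) (by simp [psiMoves])) psi14Pow
    (fun x => by ext <;> simp) (fun n x => by ext <;> simp [psi14] <;> ring) n x


@[simp]
def phi1Pow (n : ℤ) (T : LTuple) : LTuple :=
  { T with e4 := T.e4 + n * T.k, e5 := T.e5 + n * T.r, e7 := T.e7 + n * T.d,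
           e8 := T.e8 - n * T.d }

@[simp]
def phi2Pow (n : ℤ) (T : LTuple) : LTuple :=
  { T with e4 := T.e4 - n * T.k, e6 := T.e6 + n * T.l, e7 := T.e7 - n * T.d }

@[simp]
def phi3Pow (n : ℤ) (T : LTuple) : LTuple :=
  { T with e4 := T.e4 - n * T.e1, e6 := T.e6 + n * T.e3, e7 := T.e7 + n * T.e5 }

@[simp]
def phi4Pow (n : ℤ) (T : LTuple) : LTuple :=
  { T with e4 := T.e4 + n * T.e2, e5 := T.e5 + n * T.e3, e7 := T.e7 + n * T.e6,
           e8 := T.e8 - n * T.e6 }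

@[simp]
def phi5Pow (n : ℤ) (T : LTuple) : LTuple :=
  { T with e5 := T.e5 - n * T.e1, e6 := T.e6 - n * T.e2, e8 := T.e8 + n * T.e4 }

theorem phiEquiv_Phi1 (T : LTuple) : PhiEquiv T (Phi1 T) :=
  .rel _ _ <| Or.inl rfl

theorem phiEquiv_Phi2 (T : LTuple) : PhiEquiv T (Phi2 T) :=
  .rel _ _ <| Or.inr <| Or.inl rfl

theorem phiEquiv_Phi3 (T : LTuple) : PhiEquiv T (Phi3 T) :=
  .rel _ _ <| Or.inr <| Or.inr <| Or.inl rfl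

theorem phiEquiv_Phi4 (T : LTuple) : PhiEquiv T (Phi4 T) :=
  .rel _ _ <| Or.inr <| Or.inr <| Or.inr <| Or.inl rfl

theorem phiEquiv_Phi5 (T : LTuple) : PhiEquiv T (Phi5 T) :=
  .rel _ _ <| Or.inr <| Or.inr <| Or.inr <| Or.inr <| Or.inl rfl

theorem phiEquiv_phi1Pow (n : ℤ) (T : LTuple) : PhiEquiv T (phi1Pow n T) :=
  phiEquiv_equivalence.rel_intIterate phiEquiv_Phi1 phi1Pow (fun T => by ext <;> simp)
    (fun n T => by ext <;> simp [Phi1] <;> ring) n T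

theorem phiEquiv_phi2Pow (n : ℤ) (T : LTuple) : PhiEquiv T (phi2Pow n T) :=
  phiEquiv_equivalence.rel_intIterate phiEquiv_Phi2 phi2Pow (fun T => by ext <;> simp)
    (fun n T => by ext <;> simp [Phi2] <;> ring) n T

theorem phiEquiv_phi3Pow (n : ℤ) (T : LTuple) : PhiEquiv T (phi3Pow n T) :=
  phiEquiv_equivalence.rel_intIterate phiEquiv_Phi3 phi3Pow (fun T => by ext <;> simp)
    (fun n T => by ext <;> simp [Phi3] <;> ring) n T

theorem phiEquiv_phi4Pow (n : ℤ) (T : LTuple) : PhiEquiv T (phi4Pow n T) :=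
  phiEquiv_equivalence.rel_intIterate phiEquiv_Phi4 phi4Pow (fun T => by ext <;> simp)
    (fun n T => by ext <;> simp [Phi4] <;> ring) n T

theorem phiEquiv_phi5Pow (n : ℤ) (T : LTuple) : PhiEquiv T (phi5Pow n T) :=
  phiEquiv_equivalence.rel_intIterate phiEquiv_Phi5 phi5Pow (fun T => by ext <;> simp)
    (fun n T => by ext <;> simp [Phi5] <;> ring) n T

theorem phiEquiv_Phi6 {a b c : ℤ} {T : LTuple} (h : a * T.k - b * T.r + c * T.l = 0) :
    PhiEquiv T (Phi6 a b c T) :=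
  .rel _ _ <| Or.inr <| Or.inr <| Or.inr <| Or.inr <| Or.inr ⟨a, b, c, h, rfl⟩


theorem psiEquiv_F_of_phiStep {T T' : LTuple} (h : PhiStep T T') : PsiEquiv (F T) (F T') := by
  rcases h with rfl | rfl | rfl | rfl | rfl | ⟨a, b, c, habc, rfl⟩
  · convert psiEquiv_psi14Pow 1 (F T) using 1
    ext <;> simp [F, Phi1] <;> ring
  · convert (psiEquiv_psi14Pow (-1) (F T)).trans (psiEquiv_psi34Pow (-1) _) using 1
    ext <;> simp [F, Phi2] <;> ring
  · convert (psiEquiv_psi32Pow 1 (F T)).trans (psiEquiv_psi12Pow 1 _) using 1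
    ext <;> simp [F, Phi3] <;> ring
  · convert psiEquiv_psi41Pow (-1) (F T) using 1
    ext <;> simp [F, Phi4] <;> ring
  · convert psiEquiv_psi43Pow (-1) (F T) using 1
    ext <;> simp [F, Phi5] <;> ring
  · convert (psiEquiv_psi43Pow (-a) (F T)).trans <| (psiEquiv_psi23Pow (-a) _).trans <|
      (psiEquiv_psi12Pow b _).trans (psiEquiv_psi21Pow c _) using 1
    ext <;> simp [F, Phi6]
    case f4 => linear_combination -habc
    all_goals ring

theorem psiEquiv_F_of_phiEquiv {T T' : LTuple} (h : PhiEquiv T T') : PsiEquiv (F T) (F T') := by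
  induction h with
  | rel _ _ h => exact psiEquiv_F_of_phiStep h
  | refl => exact psiEquiv_equivalence.refl _
  | symm _ _ _ ih => exact ih.symm
  | trans _ _ _ _ _ ih₁ ih₂ => exact ih₁.trans ih₂

theorem exists_eq_combination_of_gcd_dvd {k l r n : ℤ} (h : (Int.gcd k (Int.gcd l r) : ℤ) ∣ n) :
    ∃ a b c : ℤ, n = a * k + b * l + c * r := by
  obtain ⟨q, rfl⟩ := h
  refine ⟨q * k.gcdA (l.gcd r), q * k.gcdB (l.gcd r) * l.gcdA r,
    q * k.gcdB (l.gcd r) * l.gcdB r, ?_⟩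
  linear_combination q * Int.gcd_eq_gcd_ab k (l.gcd r) +
    q * k.gcdB (l.gcd r) * Int.gcd_eq_gcd_ab l r

theorem dCon_of_d_eq_emod {T : LTuple} {n : ℤ}
    (h : T.d = n % Int.gcd T.k (Int.gcd T.l T.r)) : DCon T := by
  intro hne
  have hpos : 0 < (Int.gcd T.k (Int.gcd T.l T.r) : ℤ) := by
    simp only [Nat.cast_pos, Int.gcd_pos_iff, ne_eq, Nat.cast_eq_zero, Int.gcd_eq_zero_iff]
    tauto
  rw [h]
  exact ⟨Int.emod_nonneg _ hpos.ne', Int.emod_lt_of_pos _ hpos⟩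

theorem exists_dCon_psiEquiv_F (x : Tuple) : ∃ T : LTuple, DCon T ∧ PsiEquiv x (F T) := by
  obtain ⟨a, b, c, habc⟩ := exists_eq_combination_of_gcd_dvd (k := -x.c3) (l := -x.c1)
    (r := -x.c2) (Int.dvd_self_sub_emod (x := x.f4))
  refine ⟨Finv (psi23Pow a (psi12Pow c (psi21Pow (-b) x))), dCon_of_d_eq_emod (n := x.f4) ?_, ?_⟩
  · simp only [Finv, psi23Pow, psi12Pow, psi21Pow]
    linear_combination habc
  · rw [F_Finv]
    exact (psiEquiv_psi21Pow _ x).trans <| (psiEquiv_psi12Pow _ _).trans (psiEquiv_psi23Pow _ _)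

structure PsiWord where
  (a1 a2 a3 a4 b1 b2 b3 b4 l1 l2 l3 l4 l5 l6 : ℤ)

@[simp]
def tShift (u v : ℤ) (x : Tuple) : Tuple :=
  { x with t1 := x.t1 + u, t2 := x.t2 + v }

namespace PsiWord

def act (p : PsiWord) (x : Tuple) : Tuple :=
  tShift (p.l1 * x.c6 + p.l4 * x.c3 + p.l5 * x.c5 + p.l6 * x.c2)
    (p.l2 * x.c1 + p.l3 * x.c4 - p.l5 * x.c5 - p.l6 * x.c2) <|
  psi14Pow p.b4 <| psi23Pow p.b3 <| psi32Pow p.b2 <| psi41Pow p.b1 <|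
  psi34Pow p.a4 <| psi43Pow p.a3 <| psi12Pow p.a2 <| psi21Pow p.a1 x

def one : PsiWord := ⟨0, 0, 0, 0, 0, 0, 0, 0, 0, 0, 0, 0, 0, 0⟩

def comp (q p : PsiWord) : PsiWord where
  a1 := q.a1 + p.a1
  a2 := q.a2 + p.a2
  a3 := q.a3 + p.a3
  a4 := q.a4 + p.a4
  b1 := q.b1 + p.b1
  b2 := q.b2 + p.b2
  b3 := q.b3 + p.b3
  b4 := q.b4 + p.b4
  l1 := q.l1 + p.l1 + p.b1 * q.a2 + p.b2 * q.a1
  l2 := q.l2 + p.l2 - p.b1 * q.a4 - p.b4 * q.a1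
  l3 := q.l3 + p.l3 - p.b2 * q.a3 - p.b3 * q.a2
  l4 := q.l4 + p.l4 + p.b3 * q.a4 + p.b4 * q.a3
  l5 := q.l5 + p.l5 - p.b1 * q.a3 - p.b3 * q.a1
  l6 := q.l6 + p.l6 - p.b2 * q.a4 - p.b4 * q.a2

def inv (p : PsiWord) : PsiWord where
  a1 := -p.a1
  a2 := -p.a2
  a3 := -p.a3
  a4 := -p.a4
  b1 := -p.b1
  b2 := -p.b2
  b3 := -p.b3
  b4 := -p.b4
  l1 := -p.l1 + p.b1 * p.a2 + p.b2 * p.a1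
  l2 := -p.l2 - p.b1 * p.a4 - p.b4 * p.a1
  l3 := -p.l3 - p.b2 * p.a3 - p.b3 * p.a2
  l4 := -p.l4 + p.b3 * p.a4 + p.b4 * p.a3
  l5 := -p.l5 - p.b1 * p.a3 - p.b3 * p.a1
  l6 := -p.l6 - p.b2 * p.a4 - p.b4 * p.a2

theorem act_comp (q p : PsiWord) (x : Tuple) : (q.comp p).act x = q.act (p.act x) := by
  ext <;> simp [act, comp] <;> ring

theorem act_inv (p : PsiWord) (x : Tuple) : p.inv.act (p.act x) = x := by
  ext <;> simp [act, inv] <;> ring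

theorem act_one (x : Tuple) : one.act x = x := by
  ext <;> simp [act, one]

theorem exists_act_eq_of_mem_psiMoves {g : Equiv.Perm Tuple} (hg : g ∈ psiMoves) (x : Tuple) :
    ∃ p : PsiWord, g x = p.act x := by
  simp only [psiMoves, List.mem_cons, List.not_mem_nil, or_false] at hg
  rcases hg with rfl | rfl | rfl | rfl | rfl | rfl | rfl | rfl
  · exact ⟨⟨1, 0, 0, 0, 0, 0, 0, 0, 0, 0, 0, 0, 0, 0⟩, by ext <;> simp [psi21, act]⟩
  · exact ⟨⟨0, 0, 0, 0, 1, 0, 0, 0, 0, 0, 0, 0, 0, 0⟩, by ext <;> simp [psi41, act]⟩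
  · exact ⟨⟨0, 1, 0, 0, 0, 0, 0, 0, 0, 0, 0, 0, 0, 0⟩, by ext <;> simp [psi12, act]⟩
  · exact ⟨⟨0, 0, 0, 0, 0, 1, 0, 0, 0, 0, 0, 0, 0, 0⟩, by ext <;> simp [psi32, act]⟩
  · exact ⟨⟨0, 0, 1, 0, 0, 0, 0, 0, 0, 0, 0, 0, 0, 0⟩, by ext <;> simp [psi43, act]⟩
  · exact ⟨⟨0, 0, 0, 0, 0, 0, 1, 0, 0, 0, 0, 0, 0, 0⟩, by ext <;> simp [psi23, act]⟩
  · exact ⟨⟨0, 0, 0, 1, 0, 0, 0, 0, 0, 0, 0, 0, 0, 0⟩, by ext <;> simp [psi34, act]⟩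
  · exact ⟨⟨0, 0, 0, 0, 0, 0, 0, 1, 0, 0, 0, 0, 0, 0⟩, by ext <;> simp [psi14, act]⟩

theorem exists_act_eq_of_psiEquiv {x y : Tuple} (h : PsiEquiv x y) :
    ∃ p : PsiWord, y = p.act x := by
  induction h with
  | rel x _ h =>
    obtain ⟨g, hg, rfl⟩ := h
    exact exists_act_eq_of_mem_psiMoves hg x
  | refl x => exact ⟨one, (act_one x).symm⟩
  | symm x _ _ ih =>
    obtain ⟨p, rfl⟩ := ih
    exact ⟨p.inv, (act_inv p x).symm⟩
  | trans x _ _ _ _ ih₁ ih₂ =>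
    obtain ⟨p, rfl⟩ := ih₁
    obtain ⟨q, rfl⟩ := ih₂
    exact ⟨q.comp p, (act_comp q p x).symm⟩

end PsiWord


@[simp]
def eShift (u v : ℤ) (T : LTuple) : LTuple :=
  { T with e7 := T.e7 + u, e8 := T.e8 + v }

theorem phiEquiv_commutator {f g : ℤ → LTuple → LTuple} (hf : ∀ n T, PhiEquiv T (f n T))
    (hg : ∀ n T, PhiEquiv T (g n T)) (m n : ℤ) (T : LTuple) :
    PhiEquiv T (g (-n) (f (-m) (g n (f m T)))) :=
  (hf m T).trans <| (hg n _).trans <| (hf (-m) _).trans (hg (-n) _)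

theorem phiEquiv_eShift (n₁ n₂ n₃ n₄ n₅ n₆ : ℤ) (T : LTuple) :
    PhiEquiv T (eShift (n₁ * T.l + n₂ * T.e1 + n₃ * T.e2 + n₄ * T.r)
      (-(n₁ * T.l) - n₂ * T.e1 - n₅ * T.e3 + n₆ * T.k) T) := by
  convert (phiEquiv_commutator phiEquiv_phi2Pow phiEquiv_phi4Pow n₁ 1 T).trans <|
    (phiEquiv_commutator phiEquiv_phi3Pow phiEquiv_phi5Pow n₂ 1 _).trans <|
    (phiEquiv_commutator phiEquiv_phi4Pow phiEquiv_phi5Pow n₃ 1 _).trans <|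
    (phiEquiv_commutator phiEquiv_phi1Pow phiEquiv_phi3Pow n₄ 1 _).trans <|
    (phiEquiv_commutator phiEquiv_phi3Pow phiEquiv_phi4Pow n₅ 1 _).trans <|
    (phiEquiv_commutator phiEquiv_phi1Pow phiEquiv_phi5Pow n₆ 1 _) using 1
  ext <;> simp <;> ring

theorem phiEquiv_Finv_act_F {T : LTuple} {p : PsiWord}
    (hbal : -p.b3 * T.k + p.a1 * T.l + (p.b2 - p.a2) * T.r = 0) :
    PhiEquiv T (Finv (p.act (F T))) := by
  have hΦ₆ : PhiEquiv T (Phi6 (-p.b3) (p.a2 - p.b2) p.a1 T) :=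
    phiEquiv_Phi6 (by linear_combination hbal)
  have hword := hΦ₆.trans <|
    (phiEquiv_phi3Pow p.b2 _).trans <| (phiEquiv_phi5Pow (p.b3 - p.a3) _).trans <|
    (phiEquiv_phi2Pow (-p.a4) _).trans <| (phiEquiv_phi1Pow (p.b4 - p.a4) _).trans <|
    phiEquiv_phi4Pow (-p.b1) _
  convert hword.trans (phiEquiv_eShift p.l2 (p.a2 * p.b3 + p.a3 * p.b2 - p.b2 * p.b3 + p.l3)
    (-(p.a1 * p.b3) - p.l5) (-(p.a4 * p.b2) - p.l6) p.l1 (p.a4 * p.b3 - p.l4) _) using 1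
  ext <;> simp [Finv, F, PsiWord.act, Phi6]
  case d => linear_combination hbal
  case e7 => linear_combination p.b4 * hbal
  case e8 => linear_combination (p.a4 - p.b4) * hbal
  all_goals ring


theorem DCon.combination_eq_zero {T T' : LTuple} (hT : DCon T) (hT' : DCon T')
    (hk : T'.k = T.k) (hl : T'.l = T.l) (hr : T'.r = T.r) {a b c : ℤ}
    (hd : T'.d = T.d + (a * T.k + b * T.l + c * T.r)) : a * T.k + b * T.l + c * T.r = 0 := by
  by_cases h₀ : T.k = 0 ∧ T.l = 0 ∧ T.r = 0
  · simp [h₀]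
  obtain ⟨hd₀, hdg⟩ := hT h₀
  obtain ⟨hd₀', hdg'⟩ := hT' (by rwa [hk, hl, hr])
  rw [hk, hl, hr] at hdg'
  have hgk := Int.gcd_dvd_left T.k (Int.gcd T.l T.r)
  have hglr := Int.gcd_dvd_right T.k (Int.gcd T.l T.r)
  have hgl := hglr.trans (Int.gcd_dvd_left T.l T.r)
  have hgr := hglr.trans (Int.gcd_dvd_right T.l T.r)
  refine Int.eq_zero_of_abs_lt_dvd ((hgk.mul_left a).add (hgl.mul_left b) |>.add
    (hgr.mul_left c)) (abs_lt.2 ⟨?_, ?_⟩) <;> linarith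

theorem phiEquiv_of_psiEquiv_F {T T' : LTuple} (hT : DCon T) (hT' : DCon T')
    (h : PsiEquiv (F T) (F T')) : PhiEquiv T T' := by
  obtain ⟨p, hp⟩ := PsiWord.exists_act_eq_of_psiEquiv h
  obtain rfl : T' = Finv (p.act (F T)) := by rw [← hp, Finv_F]
  refine phiEquiv_Finv_act_F (DCon.combination_eq_zero hT hT' ?_ ?_ ?_ ?_) <;>
    simp [Finv, F, PsiWord.act]
  ring

/-- F induces a well-defined bijection from M (Levine tuples with the constraint on d,
modulo Φ-equivalence) onto N (ℤ¹² modulo ψ-equivalence):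
(i) Φ-equivalent tuples have ψ-equivalent images;
(ii) every tuple is ψ-equivalent to F(T) for some T satisfying the constraint;
(iii) tuples satisfying the constraint whose images are ψ-equivalent are Φ-equivalent. -/
theorem F_induces_bijection :
    (∀ T T' : LTuple, PhiEquiv T T' → PsiEquiv (F T) (F T')) ∧
    (∀ N : Tuple, ∃ T : LTuple, DCon T ∧ PsiEquiv N (F T)) ∧
    (∀ T T' : LTuple, DCon T → DCon T' → PsiEquiv (F T) (F T') → PhiEquiv T T') :=
  ⟨fun _ _ => psiEquiv_F_of_phiEquiv, exists_dCon_psiEquiv_F, fun _ _ => phiEquiv_of_psiEquiv_F⟩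
end

section
/- Let T = (k,l,r,d,e₁,…,e₈) ∈ ℤ¹² and let a, b, c be integers with ak − br + cl = 0. Then F(Φ₆(a,b,c)(T)) = (ψ₂₁ᶜ ∘ ψ₁₂ᵇ ∘ ((ψ₂₃∘ψ₄₃)⁻¹)ᵃ)(F(T)), where powers with negative exponents denote powers of the inverse map. In particular, F(Φ₆(a,b,c)(T)) is ψ-equivalent to F(T). -/
/-!
Under `F`, the move `Φ₆(a,b,c)` becomes a product of powers of three unipotent ψ-moves:
each of `ψ₂₁`, `ψ₁₂` and `ψ₂₃ ∘ ψ₄₃` adds to some coordinates multiples of coordinates it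
leaves fixed, so its `n`-th power adds `n` times as much. Composing the three powers
reproduces `F ∘ Φ₆(a,b,c)` coordinate by coordinate, except that `f₄` drifts by
`ak − br + cl`, which vanishes by hypothesis. The ψ-equivalence follows because the
permutations moving every tuple within its ψ-class form a subgroup containing every ψ-move.
-/

namespace Equiv.Perm

variable {α : Type*}

theorem zpow_apply_eq_of_succ (σ : Perm α) (φ : ℤ → α → α) (h0 : ∀ x, φ 0 x = x)
    (hsucc : ∀ n x, φ (n + 1) x = σ (φ n x)) : ∀ n x, (σ ^ n) x = φ n x := by
  intro n x
  induction n using Int.induction_on with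
  | zero => rw [zpow_zero, one_apply, h0]
  | succ n ih => rw [zpow_add_one, (Commute.zpow_self σ n).eq, mul_apply, ih, hsucc]
  | pred n ih =>
    rw [zpow_sub_one, (Commute.zpow_self σ _).inv_right.eq, mul_apply, ih, inv_eq_iff_eq,
      ← hsucc, sub_add_cancel]

def classPreserving (r : α → α → Prop) : Subgroup (Perm α) where
  carrier := {g | ∀ x, Relation.EqvGen r (g x) x}
  one_mem' x := Relation.EqvGen.refl x
  mul_mem' hg hh x := (hg _).trans _ _ _ (hh x)
  inv_mem' {g} hg x := by simpa using ((hg (g⁻¹ x)).symm)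

theorem closure_le_classPreserving (S : Set (Perm α)) :
    Subgroup.closure S ≤ classPreserving (fun x y => ∃ g ∈ S, g x = y) :=
  (Subgroup.closure_le _).2 fun g hg _ => (Relation.EqvGen.rel _ _ ⟨g, hg, rfl⟩).symm

end Equiv.Perm

open Equiv.Perm

theorem psi21_zpow_apply : ∀ (n : ℤ) (x : Tuple),
    (psi21 ^ n) x =
      { x with f3 := x.f3 + n * x.c5, f4 := x.f4 - n * x.c1, t1 := x.t1 + n * x.f1 } := by
  refine zpow_apply_eq_of_succ _ _ (fun _ => by simp) fun n x => ?_
  simp only [psi21, Equiv.coe_fn_mk]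
  congr 1 <;> ring

theorem psi12_zpow_apply : ∀ (n : ℤ) (x : Tuple),
    (psi12 ^ n) x =
      { x with f3 := x.f3 - n * x.c4, f4 := x.f4 + n * x.c2, t1 := x.t1 + n * x.f2 } := by
  refine zpow_apply_eq_of_succ _ _ (fun _ => by simp) fun n x => ?_
  simp only [psi12, Equiv.coe_fn_mk]
  congr 1 <;> ring

theorem psi23_mul_psi43_zpow_apply : ∀ (n : ℤ) (x : Tuple),
    ((psi23 * psi43) ^ n) x =
      { x with f2 := x.f2 - n * x.c4, f4 := x.f4 + n * x.c3,
               t1 := x.t1 + n * x.f3, t2 := x.t2 - n * x.f3 } := by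
  refine zpow_apply_eq_of_succ _ _ (fun _ => by simp) fun n x => ?_
  simp only [psi23, psi43, mul_apply, Equiv.coe_fn_mk]
  congr 1 <;> ring

theorem F_Phi6_eq (T : LTuple) (a b c : ℤ) (h : a * T.k - b * T.r + c * T.l = 0) :
    F (Phi6 a b c T) = ((psi21 ^ c) * (psi12 ^ b) * ((psi23 * psi43)⁻¹ ^ a)) (F T) := by
  simp only [inv_zpow', mul_apply, psi23_mul_psi43_zpow_apply, psi12_zpow_apply,
    psi21_zpow_apply, F, Phi6, Tuple.mk.injEq]
  refine ⟨trivial, trivial, trivial, trivial, trivial, trivial, trivial, by ring, by ring,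
    by linear_combination -h, by ring, by ring⟩

/-- For integers a, b, c with ak − br + cl = 0 one has
F(Φ₆(a,b,c)(T)) = (ψ₂₁ᶜ ∘ ψ₁₂ᵇ ∘ ((ψ₂₃∘ψ₄₃)⁻¹)ᵃ)(F(T)); in particular
F(Φ₆(a,b,c)(T)) is ψ-equivalent to F(T). -/
theorem F_phi6_psi (T : LTuple) (a b c : ℤ)
    (h : a * T.k - b * T.r + c * T.l = 0) :
    F (Phi6 a b c T) = ((psi21 ^ c) * (psi12 ^ b) * ((psi23 * psi43)⁻¹ ^ a)) (F T) ∧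
    PsiEquiv (F (Phi6 a b c T)) (F T) := by
  have hF := F_Phi6_eq T a b c h
  refine ⟨hF, hF ▸ closure_le_classPreserving {g | g ∈ psiMoves} ?_ (F T)⟩
  have hmem : ∀ g ∈ psiMoves, g ∈ Subgroup.closure {g | g ∈ psiMoves} :=
    fun g hg => Subgroup.subset_closure hg
  refine mul_mem (mul_mem (zpow_mem ?_ c) (zpow_mem ?_ b))
    (zpow_mem (inv_mem (mul_mem ?_ ?_)) a) <;> exact hmem _ (by simp [psiMoves])
end

section
/- For every tuple (c₁,…,c₆,f₁,…,f₄,t₁,t₂) ∈ ℤ¹², the following commutators of ψ-moves fix the coordinates c₁,…,c₆ and f₁,…,f₄ and change (t₁,t₂) by adding the indicated vector: [ψ₁₄,ψ₂₁] adds (0,c₁); [ψ₁₄,ψ₁₂] adds (c₂,−c₂); [ψ₄₃,ψ₁₄] adds (c₃,0); [ψ₃₂,ψ₄₃] adds (0,c₄); [ψ₂₁,ψ₂₃] adds (−c₅,c₅); [ψ₁₂,ψ₄₁] adds (c₆,0). -/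
open scoped commutatorElement

/-! Each ψ-move is a shear `(c, f, t) ↦ (c, f + a c, t + l f)` with `l` additive. Since the
translations `a c` of the `f`-coordinates only depend on the fixed coordinates `c`, they commute,
and the commutator of the shears `(a, l)` and `(b, m)` is the translation
`t ↦ t + l (b c) - m (a c)` of the `t`-coordinates. -/

section Shear

variable {α C V W : Type*} [AddCommGroup V] [AddCommGroup W]

structure IsShear (c : α → C) (f : α → V) (t : α → W) (a : C → V) (l : V →+ W)
    (φ : Equiv.Perm α) : Prop where
  c_apply (x : α) : c (φ x) = c x
  f_apply (x : α) : f (φ x) = f x + a (c x)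
  t_apply (x : α) : t (φ x) = t x + l (f x)

namespace IsShear

variable {c : α → C} {f : α → V} {t : α → W} {a b : C → V} {l m : V →+ W}
  {φ χ : Equiv.Perm α}

theorem c_inv_apply (hφ : IsShear c f t a l φ) (x : α) : c (φ⁻¹ x) = c x := by
  rw [← hφ.c_apply]; simp

theorem f_inv_apply (hφ : IsShear c f t a l φ) (x : α) : f (φ⁻¹ x) = f x - a (c x) :=
  eq_sub_of_add_eq <| by rw [← hφ.c_inv_apply, ← hφ.f_apply]; simp

theorem t_inv_apply (hφ : IsShear c f t a l φ) (x : α) :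
    t (φ⁻¹ x) = t x - l (f x - a (c x)) :=
  eq_sub_of_add_eq <| by rw [← hφ.f_inv_apply, ← hφ.t_apply]; simp

theorem commutator_apply_eq (hφ : IsShear c f t a l φ) (hχ : IsShear c f t b m χ)
    (hcft : Function.Injective fun x => (c x, f x, t x)) {x y : α} (hc : c y = c x)
    (hf : f y = f x) (ht : t y = t x + l (b (c x)) - m (a (c x))) : ⁅φ, χ⁆ x = y := by
  refine hcft ?_
  simp only [commutatorElement_def, Equiv.Perm.mul_apply, hφ.c_apply, hφ.f_apply, hφ.t_apply,
    hχ.c_apply, hχ.f_apply, hχ.t_apply, hφ.c_inv_apply, hφ.f_inv_apply, hφ.t_inv_apply,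
    hχ.c_inv_apply, hχ.f_inv_apply, hχ.t_inv_apply, hc, hf, ht, map_add, map_sub]
  simp only [Prod.mk.injEq, true_and]
  constructor <;> abel

end IsShear

end Shear

namespace Tuple

def c (T : Tuple) : ℤ × ℤ × ℤ × ℤ × ℤ × ℤ := (T.c1, T.c2, T.c3, T.c4, T.c5, T.c6)

def f (T : Tuple) : ℤ × ℤ × ℤ × ℤ := (T.f1, T.f2, T.f3, T.f4)

def t (T : Tuple) : ℤ × ℤ := (T.t1, T.t2)

theorem cft_injective : Function.Injective fun T : Tuple => (T.c, T.f, T.t) := by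
  rintro ⟨⟩ ⟨⟩ h
  simp_all [c, f, t]

end Tuple

theorem psi21_isShear :
    IsShear Tuple.c Tuple.f Tuple.t (fun ⟨c₁, _, _, _, c₅, _⟩ => (0, 0, c₅, -c₁))
      (.mk' (fun ⟨f₁, _, _, _⟩ => (f₁, 0)) (by rintro ⟨⟩ ⟨⟩; simp)) psi21 := by
  constructor <;> intro <;> simp [Tuple.c, Tuple.f, Tuple.t, psi21, sub_eq_add_neg]

theorem psi41_isShear :
    IsShear Tuple.c Tuple.f Tuple.t (fun ⟨_, _, _, _, c₅, c₆⟩ => (0, c₆, -c₅, 0))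
      (.mk' (fun ⟨f₁, _, _, _⟩ => (0, -f₁)) (by rintro ⟨⟩ ⟨⟩; simp [add_comm])) psi41 := by
  constructor <;> intro <;> simp [Tuple.c, Tuple.f, Tuple.t, psi41, sub_eq_add_neg]

theorem psi12_isShear :
    IsShear Tuple.c Tuple.f Tuple.t (fun ⟨_, c₂, _, c₄, _, _⟩ => (0, 0, -c₄, c₂))
      (.mk' (fun ⟨_, f₂, _, _⟩ => (f₂, 0)) (by rintro ⟨⟩ ⟨⟩; simp)) psi12 := by
  constructor <;> intro <;> simp [Tuple.c, Tuple.f, Tuple.t, psi12, sub_eq_add_neg]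

theorem psi32_isShear :
    IsShear Tuple.c Tuple.f Tuple.t (fun ⟨_, c₂, _, _, _, c₆⟩ => (c₆, 0, 0, -c₂))
      (.mk' (fun ⟨_, f₂, _, _⟩ => (0, -f₂)) (by rintro ⟨⟩ ⟨⟩; simp [add_comm])) psi32 := by
  constructor <;> intro <;> simp [Tuple.c, Tuple.f, Tuple.t, psi32, sub_eq_add_neg]

theorem psi43_isShear :
    IsShear Tuple.c Tuple.f Tuple.t (fun ⟨_, _, _, c₄, c₅, _⟩ => (c₅, -c₄, 0, 0))
      (.mk' (fun ⟨_, _, f₃, _⟩ => (f₃, 0)) (by rintro ⟨⟩ ⟨⟩; simp)) psi43 := by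
  constructor <;> intro <;> simp [Tuple.c, Tuple.f, Tuple.t, psi43, sub_eq_add_neg]

theorem psi23_isShear :
    IsShear Tuple.c Tuple.f Tuple.t (fun ⟨_, _, c₃, _, c₅, _⟩ => (-c₅, 0, 0, c₃))
      (.mk' (fun ⟨_, _, f₃, _⟩ => (0, -f₃)) (by rintro ⟨⟩ ⟨⟩; simp [add_comm])) psi23 := by
  constructor <;> intro <;> simp [Tuple.c, Tuple.f, Tuple.t, psi23, sub_eq_add_neg]

theorem psi14_isShear :
    IsShear Tuple.c Tuple.f Tuple.t (fun ⟨_, c₂, c₃, _, _, _⟩ => (0, -c₂, c₃, 0))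
      (.mk' (fun ⟨_, _, _, f₄⟩ => (0, -f₄)) (by rintro ⟨⟩ ⟨⟩; simp [add_comm])) psi14 := by
  constructor <;> intro <;> simp [Tuple.c, Tuple.f, Tuple.t, psi14, sub_eq_add_neg]

/-- The commutators of ψ-moves fix c₁,…,c₆ and f₁,…,f₄ and translate (t₁,t₂):
[ψ₁₄,ψ₂₁] adds (0,c₁); [ψ₁₄,ψ₁₂] adds (c₂,−c₂); [ψ₄₃,ψ₁₄] adds (c₃,0);
[ψ₃₂,ψ₄₃] adds (0,c₄); [ψ₂₁,ψ₂₃] adds (−c₅,c₅); [ψ₁₂,ψ₄₁] adds (c₆,0). -/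
theorem psi_commutators (T : Tuple) :
    ⁅psi14, psi21⁆ T = { T with t2 := T.t2 + T.c1 } ∧
    ⁅psi14, psi12⁆ T = { T with t1 := T.t1 + T.c2, t2 := T.t2 - T.c2 } ∧
    ⁅psi43, psi14⁆ T = { T with t1 := T.t1 + T.c3 } ∧
    ⁅psi32, psi43⁆ T = { T with t2 := T.t2 + T.c4 } ∧
    ⁅psi21, psi23⁆ T = { T with t1 := T.t1 - T.c5, t2 := T.t2 + T.c5 } ∧
    ⁅psi12, psi41⁆ T = { T with t1 := T.t1 + T.c6 } := by
  refine ⟨psi14_isShear.commutator_apply_eq psi21_isShear Tuple.cft_injective rfl rfl ?_,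
    psi14_isShear.commutator_apply_eq psi12_isShear Tuple.cft_injective rfl rfl ?_,
    psi43_isShear.commutator_apply_eq psi14_isShear Tuple.cft_injective rfl rfl ?_,
    psi32_isShear.commutator_apply_eq psi43_isShear Tuple.cft_injective rfl rfl ?_,
    psi21_isShear.commutator_apply_eq psi23_isShear Tuple.cft_injective rfl rfl ?_,
    psi12_isShear.commutator_apply_eq psi41_isShear Tuple.cft_injective rfl rfl ?_⟩ <;>
  simp only [Tuple.t, Tuple.c, AddMonoidHom.mk'_apply, Prod.mk_add_mk, Prod.mk_sub_mk,
    Prod.mk.injEq] <;>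
  constructor <;> ring
end

section
/- Let T = (0,0,0,0,0,0,f₁,f₂,f₃,f₄,t₁,t₂) and T′ = (0,0,0,0,0,0,f₁′,f₂′,f₃′,f₄′,t₁′,t₂′) be tuples in ℤ¹² with all c-coordinates zero. Then T and T′ are ψ-equivalent if and only if: fᵢ = fᵢ′ for i = 1,2,3,4, t₁ ≡ t₁′ (mod gcd(f₁,f₂,f₃,f₄)) and t₂ ≡ t₂′ (mod gcd(f₁,f₂,f₃,f₄)); here when f₁ = f₂ = f₃ = f₄ = 0 the congruences mean t₁ = t₁′ and t₂ = t₂′. -/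
open Relation

theorem Relation.EqvGen.eq_of_invariant {α β : Type*} {r : α → α → Prop} {f : α → β}
    (h : ∀ x y, r x y → f x = f y) {x y : α} (hxy : EqvGen r x y) : f x = f y :=
  EqvGen.eqvGen_le (r' := Setoid.ker f) h x y hxy

section Shift

variable {α : Type*} (r : α → α → Prop) (F : ℤ → α)

def shiftSubgroup : AddSubgroup ℤ where
  carrier := {d | ∀ u, EqvGen r (F u) (F (u + d))}
  zero_mem' u := by simpa using EqvGen.refl (F u)
  add_mem' {a b} ha hb u := by simpa [add_assoc] using (ha u).trans _ _ _ (hb (u + a))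
  neg_mem' {a} ha u := by simpa using (ha (u + -a)).symm

variable {r F}

theorem mem_shiftSubgroup_of_forall {d : ℤ} (h : ∀ u, r (F u) (F (u + d))) :
    d ∈ shiftSubgroup r F :=
  fun u => EqvGen.rel _ _ (h u)

theorem eqvGen_of_sub_mem_shiftSubgroup {u v : ℤ} (h : v - u ∈ shiftSubgroup r F) :
    EqvGen r (F u) (F v) := by
  simpa using h u

end Shift

def gcd4 (a b c d : ℤ) : ℤ := Int.gcd a (Int.gcd b (Int.gcd c d))

theorem gcd4_dvd_first (a b c d : ℤ) : gcd4 a b c d ∣ a := Int.gcd_dvd_left _ _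

theorem gcd4_dvd_second (a b c d : ℤ) : gcd4 a b c d ∣ b :=
  (Int.gcd_dvd_right _ _).trans (Int.gcd_dvd_left _ _)

theorem gcd4_dvd_third (a b c d : ℤ) : gcd4 a b c d ∣ c :=
  (Int.gcd_dvd_right _ _).trans <| (Int.gcd_dvd_right _ _).trans (Int.gcd_dvd_left _ _)

theorem gcd4_dvd_fourth (a b c d : ℤ) : gcd4 a b c d ∣ d :=
  (Int.gcd_dvd_right _ _).trans <| (Int.gcd_dvd_right _ _).trans (Int.gcd_dvd_right _ _)

theorem AddSubgroup.intCast_gcd_mem {H : AddSubgroup ℤ} {a b : ℤ} (ha : a ∈ H) (hb : b ∈ H) :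
    (a.gcd b : ℤ) ∈ H := by
  rw [Int.gcd_eq_gcd_ab, mul_comm a, mul_comm b]
  exact add_mem (H.zsmul_mem ha _) (H.zsmul_mem hb _)

theorem AddSubgroup.mem_of_gcd4_dvd {H : AddSubgroup ℤ} {a b c d n : ℤ} (ha : a ∈ H)
    (hb : b ∈ H) (hc : c ∈ H) (hd : d ∈ H) (hn : gcd4 a b c d ∣ n) : n ∈ H := by
  obtain ⟨k, rfl⟩ := hn
  rw [mul_comm]
  exact H.zsmul_mem (intCast_gcd_mem ha (intCast_gcd_mem hb (intCast_gcd_mem hc hd))) k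

theorem Int.add_emod_of_dvd {a b n : ℤ} (h : n ∣ b) : (a + b) % n = a % n := by
  simp [Int.add_emod, Int.emod_eq_zero_of_dvd h]

theorem Int.sub_emod_of_dvd {a b n : ℤ} (h : n ∣ b) : (a - b) % n = a % n := by
  simp [Int.sub_emod, Int.emod_eq_zero_of_dvd h]

def PsiStep (x y : Tuple) : Prop := ∃ m ∈ psiMoves, m x = y

-- Only the slice c = 0 matters, so nothing is recorded off it.
def psiInvariant (x : Tuple) : Option (ℤ × ℤ × ℤ × ℤ × ℤ × ℤ) :=
  if x.c1 = 0 ∧ x.c2 = 0 ∧ x.c3 = 0 ∧ x.c4 = 0 ∧ x.c5 = 0 ∧ x.c6 = 0 then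
    some (x.f1, x.f2, x.f3, x.f4, x.t1 % gcd4 x.f1 x.f2 x.f3 x.f4,
      x.t2 % gcd4 x.f1 x.f2 x.f3 x.f4)
  else none

theorem psiInvariant_move {m : Equiv.Perm Tuple} (hm : m ∈ psiMoves) (x : Tuple) :
    psiInvariant (m x) = psiInvariant x := by
  simp only [psiMoves, List.mem_cons, List.not_mem_nil, or_false] at hm
  obtain ⟨c1, c2, c3, c4, c5, c6, f1, f2, f3, f4, t1, t2⟩ := x
  by_cases hc : c1 = 0 ∧ c2 = 0 ∧ c3 = 0 ∧ c4 = 0 ∧ c5 = 0 ∧ c6 = 0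
  · obtain ⟨rfl, rfl, rfl, rfl, rfl, rfl⟩ := hc
    rcases hm with rfl | rfl | rfl | rfl | rfl | rfl | rfl | rfl <;>
      simp [psiInvariant, psi21, psi41, psi12, psi32, psi43, psi23, psi34, psi14,
        Int.add_emod_of_dvd, Int.sub_emod_of_dvd, gcd4_dvd_first, gcd4_dvd_second,
        gcd4_dvd_third, gcd4_dvd_fourth]
  · rcases hm with rfl | rfl | rfl | rfl | rfl | rfl | rfl | rfl <;>
      simp [psiInvariant, psi21, psi41, psi12, psi32, psi43, psi23, psi34, psi14, hc]

theorem PsiEquiv.psiInvariant_eq {x y : Tuple} (h : PsiEquiv x y) :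
    psiInvariant x = psiInvariant y :=
  EqvGen.eq_of_invariant (fun x _ ⟨_, hm, hxy⟩ => hxy ▸ (psiInvariant_move hm x).symm) h

section CZero

variable (f1 f2 f3 f4 : ℤ)

theorem mem_shiftSubgroup_t1_of_gcd4_dvd (t2 : ℤ) {d : ℤ} (hd : gcd4 f1 f2 f3 f4 ∣ d) :
    d ∈ shiftSubgroup PsiStep (fun t1 => ⟨0, 0, 0, 0, 0, 0, f1, f2, f3, f4, t1, t2⟩) := by
  refine AddSubgroup.mem_of_gcd4_dvd ?_ ?_ ?_ ?_ hd
  · exact mem_shiftSubgroup_of_forall fun _ => ⟨psi21, by simp [psiMoves], by simp [psi21]⟩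
  · exact mem_shiftSubgroup_of_forall fun _ => ⟨psi12, by simp [psiMoves], by simp [psi12]⟩
  · exact mem_shiftSubgroup_of_forall fun _ => ⟨psi43, by simp [psiMoves], by simp [psi43]⟩
  · exact mem_shiftSubgroup_of_forall fun _ => ⟨psi34, by simp [psiMoves], by simp [psi34]⟩

theorem mem_shiftSubgroup_t2_of_gcd4_dvd (t1 : ℤ) {d : ℤ} (hd : gcd4 f1 f2 f3 f4 ∣ d) :
    d ∈ shiftSubgroup PsiStep (fun t2 => ⟨0, 0, 0, 0, 0, 0, f1, f2, f3, f4, t1, t2⟩) := by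
  refine AddSubgroup.mem_of_gcd4_dvd (neg_mem_iff.mp ?_) (neg_mem_iff.mp ?_)
    (neg_mem_iff.mp ?_) (neg_mem_iff.mp ?_) hd
  · exact mem_shiftSubgroup_of_forall fun _ =>
      ⟨psi41, by simp [psiMoves], by simp [psi41, sub_eq_add_neg]⟩
  · exact mem_shiftSubgroup_of_forall fun _ =>
      ⟨psi32, by simp [psiMoves], by simp [psi32, sub_eq_add_neg]⟩
  · exact mem_shiftSubgroup_of_forall fun _ =>
      ⟨psi23, by simp [psiMoves], by simp [psi23, sub_eq_add_neg]⟩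
  · exact mem_shiftSubgroup_of_forall fun _ =>
      ⟨psi14, by simp [psiMoves], by simp [psi14, sub_eq_add_neg]⟩

theorem psiEquiv_of_gcd4_dvd {t1 t2 t1' t2' : ℤ} (h1 : gcd4 f1 f2 f3 f4 ∣ t1' - t1)
    (h2 : gcd4 f1 f2 f3 f4 ∣ t2' - t2) :
    PsiEquiv ⟨0, 0, 0, 0, 0, 0, f1, f2, f3, f4, t1, t2⟩
      ⟨0, 0, 0, 0, 0, 0, f1, f2, f3, f4, t1', t2'⟩ :=
  (eqvGen_of_sub_mem_shiftSubgroup (mem_shiftSubgroup_t1_of_gcd4_dvd f1 f2 f3 f4 t2 h1)).trans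
    _ _ _ (eqvGen_of_sub_mem_shiftSubgroup (mem_shiftSubgroup_t2_of_gcd4_dvd f1 f2 f3 f4 t1' h2))

end CZero

/-- Classification when all c-coordinates vanish: two such tuples are ψ-equivalent
iff the f-coordinates agree and t₁, t₂ agree modulo gcd(f₁,f₂,f₃,f₄) (where the
congruence modulo 0 means equality). -/
theorem classification_all_c_zero (f1 f2 f3 f4 t1 t2 f1' f2' f3' f4' t1' t2' : ℤ) :
    PsiEquiv ⟨0, 0, 0, 0, 0, 0, f1, f2, f3, f4, t1, t2⟩
        ⟨0, 0, 0, 0, 0, 0, f1', f2', f3', f4', t1', t2'⟩ ↔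
      (f1 = f1' ∧ f2 = f2' ∧ f3 = f3' ∧ f4 = f4' ∧
        (Int.gcd f1 (Int.gcd f2 (Int.gcd f3 f4)) : ℤ) ∣ t1 - t1' ∧
        (Int.gcd f1 (Int.gcd f2 (Int.gcd f3 f4)) : ℤ) ∣ t2 - t2') := by
  constructor
  · intro h
    obtain ⟨rfl, rfl, rfl, rfl, h1, h2⟩ := by simpa [psiInvariant] using h.psiInvariant_eq
    exact ⟨rfl, rfl, rfl, rfl, Int.ModEq.dvd h1.symm, Int.ModEq.dvd h2.symm⟩
  · rintro ⟨rfl, rfl, rfl, rfl, h1, h2⟩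
    exact psiEquiv_of_gcd4_dvd f1 f2 f3 f4 (dvd_sub_comm.mp h1) (dvd_sub_comm.mp h2)
end

section
/- If a tuple (c₁,…,c₆,f₁,…,f₄,t₁,t₂) ∈ ℤ¹² satisfies c₁ = c₂ = c₄ = c₅ = 0, then the integer Δ′ = c₃c₆t₂ + c₃f₁f₂ + c₆f₃f₄ is unchanged by each of the eight ψ-moves and their inverses; consequently Δ′ takes the same value on any two ψ-equivalent tuples with c₁ = c₂ = c₄ = c₅ = 0. -/
/-- The quantity Δ′ = c₃c₆t₂ + c₃f₁f₂ + c₆f₃f₄. -/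
def Delta' (T : Tuple) : ℤ :=
  T.c3 * T.c6 * T.t2 + T.c3 * T.f1 * T.f2 + T.c6 * T.f3 * T.f4

/-- If c₁ = c₂ = c₄ = c₅ = 0 then Δ′ is unchanged by each ψ-move and its inverse;
consequently Δ′ agrees on any two ψ-equivalent tuples with c₁ = c₂ = c₄ = c₅ = 0. -/
theorem Delta'_invariant :
    (∀ T : Tuple, T.c1 = 0 → T.c2 = 0 → T.c4 = 0 → T.c5 = 0 →
      ∀ g ∈ psiMoves, Delta' (g T) = Delta' T ∧ Delta' (g⁻¹ T) = Delta' T) ∧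
    (∀ T T' : Tuple, T.c1 = 0 → T.c2 = 0 → T.c4 = 0 → T.c5 = 0 →
      T'.c1 = 0 → T'.c2 = 0 → T'.c4 = 0 → T'.c5 = 0 →
      PsiEquiv T T' → Delta' T = Delta' T') := by
  have hstep : ∀ T T' : Tuple, (∃ g ∈ psiMoves, g T = T') →
      (T.c1 = T'.c1 ∧ T.c2 = T'.c2 ∧ T.c4 = T'.c4 ∧ T.c5 = T'.c5) ∧
      (T.c1 = 0 → T.c2 = 0 → T.c4 = 0 → T.c5 = 0 → Delta' T = Delta' T') := by
    rintro T T' ⟨g, hg, rfl⟩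
    simp only [psiMoves, List.mem_cons, List.not_mem_nil, or_false] at hg
    rcases hg with rfl | rfl | rfl | rfl | rfl | rfl | rfl | rfl <;>
      cases T <;>
      refine ⟨⟨rfl, rfl, rfl, rfl⟩, fun h1 h2 h4 h5 => ?_⟩ <;>
      simp_all [psi21, psi41, psi12, psi32, psi43, psi23, psi34, psi14,
        Delta', Equiv.coe_fn_mk] <;> ring
  constructor
  · intro T h1 h2 h4 h5 g hg
    simp only [psiMoves, List.mem_cons, List.not_mem_nil, or_false] at hg
    rcases hg with rfl | rfl | rfl | rfl | rfl | rfl | rfl | rfl <;>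
      cases T <;>
      constructor <;>
      simp_all [psi21, psi41, psi12, psi32, psi43, psi23, psi34, psi14,
        Delta', Equiv.Perm.inv_def, Equiv.coe_fn_mk, Equiv.coe_fn_symm_mk] <;> ring
  · intro T T' h1 h2 h4 h5 _ _ _ _ hequiv
    have key : ∀ a b : Tuple, PsiEquiv a b →
        ((a.c1 = 0 ∧ a.c2 = 0 ∧ a.c4 = 0 ∧ a.c5 = 0) ↔
         (b.c1 = 0 ∧ b.c2 = 0 ∧ b.c4 = 0 ∧ b.c5 = 0)) ∧
        ((a.c1 = 0 ∧ a.c2 = 0 ∧ a.c4 = 0 ∧ a.c5 = 0) → Delta' a = Delta' b) := by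
      intro a b hab
      induction hab with
      | rel x y hxy =>
          obtain ⟨⟨e1, e2, e4, e5⟩, hd⟩ := hstep x y hxy
          exact ⟨by rw [e1, e2, e4, e5], fun ⟨z1, z2, z4, z5⟩ => hd z1 z2 z4 z5⟩
      | refl x => exact ⟨Iff.rfl, fun _ => rfl⟩
      | symm x y _ ih =>
          exact ⟨ih.1.symm, fun hc => (ih.2 (ih.1.mpr hc)).symm⟩
      | trans x y z _ _ ih1 ih2 =>
          exact ⟨ih1.1.trans ih2.1, fun hc => (ih1.2 hc).trans (ih2.2 (ih1.1.mp hc))⟩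
    exact (key T T' hequiv).2 ⟨h1, h2, h4, h5⟩
end

section
/- The tuples (1,2,2,4,2,2,0,0,0,0,0,0) and (1,2,2,4,2,2,−2,0,2,1,1,1) in ℤ¹² (coordinates ordered (c₁,…,c₆,f₁,…,f₄,t₁,t₂)) are not ψ-equivalent. -/
/-- The invariant: the `c` coordinates take the fixed values, `f₂,f₃` are even,
and `t₁ ≡ f₁·f₄ (mod 2)`. -/
def Good (x : Tuple) : Prop :=
  x.c1 = 1 ∧ x.c2 = 2 ∧ x.c3 = 2 ∧ x.c4 = 4 ∧ x.c5 = 2 ∧ x.c6 = 2 ∧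
  x.f2 % 2 = 0 ∧ x.f3 % 2 = 0 ∧ (x.t1 - x.f1 * x.f4) % 2 = 0

lemma step_good : ∀ g ∈ psiMoves, ∀ x : Tuple, (Good (g x) ↔ Good x) := by
  intro g hg x
  obtain ⟨c1, c2, c3, c4, c5, c6, f1, f2, f3, f4, t1, t2⟩ := x
  have e1 : f1 * (f4 - 1) = f1 * f4 - f1 := by ring
  have e2 : (f1 + 2) * (f4 - 2) = f1 * f4 - 2 * f1 + 2 * f4 - 4 := by ring
  have e3 : (f1 + 2) * f4 = f1 * f4 + 2 * f4 := by ring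
  have e4 : (f1 - 2) * (f4 + 2) = f1 * f4 + 2 * f1 - 2 * f4 - 4 := by ring
  have e5 : (f1 - 1) * f4 = f1 * f4 - f4 := by ring
  have e6 : f1 * (f4 + 2) = f1 * f4 + 2 * f1 := by ring
  simp only [psiMoves, List.mem_cons, List.not_mem_nil, or_false] at hg
  rcases hg with rfl | rfl | rfl | rfl | rfl | rfl | rfl | rfl <;>
    simp only [psi21, psi41, psi12, psi32, psi43, psi23, psi34, psi14,
      Equiv.coe_fn_mk, Good] <;>
    (constructor <;> rintro ⟨rfl, rfl, rfl, rfl, rfl, rfl, h7, h8, h9⟩ <;>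
      refine ⟨rfl, rfl, rfl, rfl, rfl, rfl, ?_, ?_, ?_⟩ <;> omega)

theorem not_psi_equiv_example' :
    ¬ PsiEquiv ⟨1, 2, 2, 4, 2, 2, 0, 0, 0, 0, 0, 0⟩
        ⟨1, 2, 2, 4, 2, 2, -2, 0, 2, 1, 1, 1⟩ := by
  intro h
  have key : ∀ x y, PsiEquiv x y → (Good x ↔ Good y) := by
    intro x y h
    induction h with
    | rel x y h => obtain ⟨g, hg, rfl⟩ := h; exact (step_good g hg x).symm
    | refl x => exact Iff.rfl
    | symm _ _ _ ih => exact ih.symm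
    | trans _ _ _ _ _ ih1 ih2 => exact ih1.trans ih2
  have h1 : Good ⟨1, 2, 2, 4, 2, 2, 0, 0, 0, 0, 0, 0⟩ := by
    refine ⟨rfl, rfl, rfl, rfl, rfl, rfl, ?_, ?_, ?_⟩ <;> norm_num [Good]
  have h2 : ¬ Good ⟨1, 2, 2, 4, 2, 2, -2, 0, 2, 1, 1, 1⟩ := by
    rintro ⟨-, -, -, -, -, -, -, -, h9⟩
    norm_num at h9
  exact h2 ((key _ _ h).mp h1)

/-- The tuples (1,2,2,4,2,2,0,0,0,0,0,0) and (1,2,2,4,2,2,−2,0,2,1,1,1) are not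
ψ-equivalent. -/
theorem not_psi_equiv_example :
    ¬ PsiEquiv ⟨1, 2, 2, 4, 2, 2, 0, 0, 0, 0, 0, 0⟩
        ⟨1, 2, 2, 4, 2, 2, -2, 0, 2, 1, 1, 1⟩ := by
  exact not_psi_equiv_example'
end

section
/- For all integers t₁, t₂, s₁, s₂, the tuples (−1,−4,−4,−1,−1,−1,1,4,4,16,t₁,t₂) and (−1,−4,−4,−1,−1,−1,1,8,4,16,s₁,s₂) in ℤ¹² (coordinates ordered (c₁,…,c₆,f₁,…,f₄,t₁,t₂)) are not ψ-equivalent; indeed, for tuples with these c-coordinates the residue of f₁+f₂+f₃+f₄ modulo 3 is preserved by every ψ-move, and it equals 1 for the first tuple and 2 for the second. -/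
/-- The conserved predicate: fixed c-coordinates and f-sum residue 1 mod 3. -/
def PInv (T : Tuple) : Prop :=
  T.c1 = -1 ∧ T.c2 = -4 ∧ T.c3 = -4 ∧ T.c4 = -1 ∧ T.c5 = -1 ∧ T.c6 = -1 ∧
    (T.f1 + T.f2 + T.f3 + T.f4) % 3 = 1

lemma pinv_step {x y : Tuple} (h : ∃ g ∈ psiMoves, g x = y) : PInv x ↔ PInv y := by
  obtain ⟨g, hg, rfl⟩ := h
  simp only [psiMoves, List.mem_cons, List.not_mem_nil, or_false] at hg
  cases x
  rcases hg with rfl | rfl | rfl | rfl | rfl | rfl | rfl | rfl <;>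
    · simp only [PInv, psi21, psi41, psi12, psi32, psi43, psi23, psi34, psi14,
        Equiv.coe_fn_mk]
      constructor <;> rintro ⟨rfl, rfl, rfl, rfl, rfl, rfl, h7⟩ <;>
        exact ⟨rfl, rfl, rfl, rfl, rfl, rfl, by omega⟩

lemma pinv_equiv {x y : Tuple} (h : PsiEquiv x y) : PInv x ↔ PInv y := by
  induction h with
  | rel _ _ h => exact pinv_step h
  | refl => rfl
  | symm _ _ _ ih => exact ih.symm
  | trans _ _ _ _ _ ih1 ih2 => exact ih1.trans ih2

/-- For tuples with c-coordinates (−1,−4,−4,−1,−1,−1), the residue of f₁+f₂+f₃+f₄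
modulo 3 is preserved by every ψ-move; it equals 1 for the tuple with f = (1,4,4,16)
and 2 for the tuple with f = (1,8,4,16), so for all t₁,t₂,s₁,s₂ the corresponding
tuples are not ψ-equivalent. -/
theorem hughes_links_not_equiv :
    (∀ T : Tuple, T.c1 = -1 → T.c2 = -4 → T.c3 = -4 → T.c4 = -1 → T.c5 = -1 →
      T.c6 = -1 → ∀ g ∈ psiMoves,
        ((g T).f1 + (g T).f2 + (g T).f3 + (g T).f4) % 3 =
          (T.f1 + T.f2 + T.f3 + T.f4) % 3) ∧
    ((1 + 4 + 4 + 16 : ℤ) % 3 = 1) ∧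
    ((1 + 8 + 4 + 16 : ℤ) % 3 = 2) ∧
    (∀ t1 t2 s1 s2 : ℤ,
      ¬ PsiEquiv ⟨-1, -4, -4, -1, -1, -1, 1, 4, 4, 16, t1, t2⟩
          ⟨-1, -4, -4, -1, -1, -1, 1, 8, 4, 16, s1, s2⟩) := by
  refine ⟨?_, by norm_num, by norm_num, ?_⟩
  · intro T h1 h2 h3 h4 h5 h6 g hg
    simp only [psiMoves, List.mem_cons, List.not_mem_nil, or_false] at hg
    cases T
    rcases hg with rfl | rfl | rfl | rfl | rfl | rfl | rfl | rfl <;>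
      simp_all [psi21, psi41, psi12, psi32, psi43, psi23, psi34, psi14] <;> omega
  · intro t1 t2 s1 s2 h
    have := pinv_equiv h
    simp [PInv] at this
end
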